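/- arXiv:1411.6449 — 7 statements merged into one kernel-verified Lean document; each statement's English description precedes it below -/
import Mathlib

section
/- If a group Γ acts on a metric space (X, d) such that for all x, y ∈ X and g ∈ Γ with gx ≠ x, we have max(d(gx, y), d(g⁻¹x, y)) > d(x, y), then every finite subset A of X with at least two elements has at least two extremal points, i.e., the action is diffuse. -/
theorem stmt_0 {Γ X : Type*} [Group Γ] [MetricSpace X] [MulAction Γ X]
    (h : ∀ (x y : X) (g : Γ), g • x ≠ x →
      dist x y < max (dist (g • x) y) (dist (g⁻¹ • x) y)) :
    ∀ A : Finset X, 2 ≤ A.card →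
      ∃ a ∈ A, ∃ b ∈ A, a ≠ b ∧
        (∀ g : Γ, g • a ≠ a → g • a ∉ A ∨ g⁻¹ • a ∉ A) ∧
        (∀ g : Γ, g • b ≠ b → g • b ∉ A ∨ g⁻¹ • b ∉ A) := by
  intro A hA
  have hne : (A ×ˢ A).Nonempty := by
    have : A.Nonempty := Finset.card_pos.mp (by omega)
    exact this.product this
  obtain ⟨p, hp, hmax⟩ := (A ×ˢ A).exists_max_image (fun p => dist p.1 p.2) hne
  obtain ⟨a, b⟩ := p
  rw [Finset.mem_product] at hp
  obtain ⟨ha, hb⟩ := hp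
  have hmax' : ∀ x ∈ A, ∀ y ∈ A, dist x y ≤ dist a b := by
    intro x hx y hy
    exact hmax (x, y) (Finset.mem_product.mpr ⟨hx, hy⟩)
  have hab : a ≠ b := by
    obtain ⟨x, hx, y, hy, hxy⟩ := Finset.one_lt_card.mp hA
    have : (0 : ℝ) < dist x y := dist_pos.mpr hxy
    have := hmax' x hx y hy
    intro e
    rw [e] at this
    simp [dist_self] at this
    exact hxy this
  refine ⟨a, ha, b, hb, hab, ?_, ?_⟩
  · intro g hg
    by_contra hc
    push_neg at hc
    have h1 := hmax' _ hc.1 b hb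
    have h2 := hmax' _ hc.2 b hb
    have := h a b g hg
    exact absurd this (not_lt.mpr (max_le h1 h2))
  · intro g hg
    by_contra hc
    push_neg at hc
    have h1 := hmax' _ hc.1 a ha
    have h2 := hmax' _ hc.2 a ha
    have := h b a g hg
    rw [dist_comm b a] at this
    exact absurd this (not_lt.mpr (max_le h1 h2))
end

section
/- Let X be a metric space, x ∈ X, and φ an isometry of X. Suppose there exists an increasing function f : [0,∞) → ℝ such that for every y ∈ X the function k ↦ f(d(y, φᵏx)) from ℤ to ℝ is strictly convex (i.e., is the restriction of a strictly convex function on ℝ). Let B_k = {y ∈ X : d(y, φᵏx) ≤ d(y, x)}. Then B₁ ∩ B₋₁ = ∅. -/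
theorem stmt_2 {X : Type*} [MetricSpace X] (x : X) (φ : X ≃ᵢ X)
    (f : ℝ → ℝ) (hf : StrictMonoOn f (Set.Ici 0))
    (hconv : ∀ y : X, ∃ F : ℝ → ℝ, StrictConvexOn ℝ Set.univ F ∧
      ∀ k : ℤ, F (k : ℝ) = f (dist y ((φ ^ k) x))) :
    {y : X | dist y ((φ ^ (1 : ℤ)) x) ≤ dist y x} ∩
      {y : X | dist y ((φ ^ (-1 : ℤ)) x) ≤ dist y x} = ∅ := by
  ext y
  simp only [Set.mem_inter_iff, Set.mem_setOf_eq, Set.mem_empty_iff_false, iff_false, not_and]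
  intro h1 h2
  obtain ⟨F, hF, hFk⟩ := hconv y
  have h0 : F 0 = f (dist y x) := by
    have := hFk 0
    simpa using this
  have e1 : F 1 = f (dist y ((φ ^ (1 : ℤ)) x)) := by simpa using hFk 1
  have e2 : F (-1) = f (dist y ((φ ^ (-1 : ℤ)) x)) := by simpa using hFk (-1)
  have hmono := hf.monotoneOn
  have l1 : F 1 ≤ F 0 := by
    rw [e1, h0]; exact hmono dist_nonneg dist_nonneg h1
  have l2 : F (-1) ≤ F 0 := by
    rw [e2, h0]; exact hmono dist_nonneg dist_nonneg h2
  have key := hF.2 (Set.mem_univ (-1 : ℝ)) (Set.mem_univ (1 : ℝ)) (by norm_num)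
    (by norm_num : (0:ℝ) < 1/2) (by norm_num : (0:ℝ) < 1/2) (by norm_num)
  have : F 0 < 1/2 * F (-1) + 1/2 * F 1 := by
    have h' : (1/2 : ℝ) • (-1 : ℝ) + (1/2 : ℝ) • (1 : ℝ) = 0 := by norm_num
    rw [h'] at key
    simpa [smul_eq_mul] using key
  linarith
end

section
/- Let A be one of ℝ, ℂ, or the quaternions ℍ, and consider V = A^{n+1} with the sesquilinear form ⟨v, v'⟩ = conj(v'_{n+1}) v₁ + Σ_{i=2}^n conj(v'_i) v_i + conj(v'_1) v_{n+1}. If v, v' ∈ V satisfy ⟨v,v⟩ < 0 and ⟨v',v'⟩ < 0, then tr_{A/ℝ}(conj(v_{n+1}) v'_{n+1} ⟨v, v'⟩) < 0. -/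
/-- The sesquilinear form `⟨v, w⟩ = conj(w_{n+1}) v₁ + ∑_{i=2}^n conj(w_i) v_i
+ conj(w_1) v_{n+1}` of signature `(n,1)`. -/
def herm {A : Type*} [Ring A] [StarRing A] {n : ℕ} (v w : Fin (n + 1) → A) : A :=
  star (w (Fin.last n)) * v 0 +
    (∑ i ∈ Finset.Ioo (0 : Fin (n + 1)) (Fin.last n), star (w i) * v i) +
    star (w 0) * v (Fin.last n)

/-!
As `tr(x) = x + x̄ = 2 Re x`, it suffices to show `Re(b̄ b' ⟨v,v'⟩) < 0`, where `b = v_{n+1}` and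
`b' = v'_{n+1}`. With `S = ∑_{i=2}^n |v_i|²` and `S' = ∑_{i=2}^n |v'_i|²` we have
`Re ⟨v,v⟩ = 2 Re(v̄₁ b) + S < 0`; in particular `b ≠ 0`, and likewise `b' ≠ 0`. Since `b' b̄' = |b'|²`
is central and `Re` is invariant under cyclic permutations,
`Re(b̄ b' ⟨v,v'⟩) = |b'|² Re(v̄₁ b) + ∑ Re(b̄ b' v̄'_i v_i) + |b|² Re(v̄'₁ b')`,
and each middle term is at most `|b||b'||v_i||v'_i| ≤ (|b'|²|v_i|² + |b|²|v'_i|²)/2`. Hence the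
whole expression is at most `|b'|² (Re(v̄₁ b) + S/2) + |b|² (Re(v̄'₁ b') + S'/2) < 0`.
-/

open Finset

/-- Abstracts the real part of `ℝ`, `ℂ` and `ℍ`; the last field says that the norm comes from the
involution, as in a composition algebra. -/
structure IsRealPart {A : Type*} [NormedRing A] [StarRing A] [Algebra ℝ A] (re : A →ₗ[ℝ] ℝ) :
    Prop where
  map_one : re 1 = 1
  map_mul_comm (x y : A) : re (x * y) = re (y * x)
  map_star (x : A) : re (star x) = re x
  le_norm (x : A) : re x ≤ ‖x‖
  star_mul_self (x : A) : star x * x = algebraMap ℝ A (‖x‖ ^ 2)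

namespace IsRealPart

variable {A : Type*} [NormedRing A] [StarRing A] [Algebra ℝ A] {re : A →ₗ[ℝ] ℝ}

theorem map_star_mul_comm (h : IsRealPart re) (x y : A) : re (star x * y) = re (star y * x) := by
  rw [← h.map_star, star_mul, star_star]

theorem map_star_mul_self (h : IsRealPart re) (x : A) : re (star x * x) = ‖x‖ ^ 2 := by
  rw [h.star_mul_self, ← mul_one (algebraMap ℝ A _), ← Algebra.smul_def, map_smul, h.map_one,
    smul_eq_mul, mul_one]

theorem map_mul_le (h : IsRealPart re) (x y : A) : re (x * y) ≤ ‖x‖ * ‖y‖ :=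
  (h.le_norm _).trans (norm_mul_le _ _)

variable {n : ℕ}

theorem map_herm_self (h : IsRealPart re) (w : Fin (n + 1) → A) :
    re (herm w w) =
      2 * re (star (w 0) * w (Fin.last n)) + ∑ i ∈ Ioo 0 (Fin.last n), ‖w i‖ ^ 2 := by
  simp only [herm, map_add, map_sum, h.map_star_mul_self, h.map_star_mul_comm (w (Fin.last n))]
  ring

theorem last_ne_zero_of_map_herm_self_neg (h : IsRealPart re) {w : Fin (n + 1) → A}
    (hw : re (herm w w) < 0) : w (Fin.last n) ≠ 0 := by
  intro hlast
  rw [h.map_herm_self, hlast, mul_zero, map_zero, mul_zero, zero_add] at hw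
  exact hw.not_ge (sum_nonneg fun i _ => by positivity)

variable [NormedStarGroup A]

theorem mul_star_self (h : IsRealPart re) (x : A) : x * star x = algebraMap ℝ A (‖x‖ ^ 2) := by
  simpa only [star_star, norm_star] using h.star_mul_self (star x)

theorem map_star_mul_mul_star_mul_le (h : IsRealPart re) (a b x y : A) :
    re (star a * b * (star y * x)) ≤ (‖b‖ ^ 2 * ‖x‖ ^ 2 + ‖a‖ ^ 2 * ‖y‖ ^ 2) / 2 := by
  have norm_star_mul_le (c d : A) : ‖star c * d‖ ≤ ‖c‖ * ‖d‖ :=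
    (norm_mul_le _ _).trans_eq (by rw [norm_star])
  have hCS : re (star a * b * (star y * x)) ≤ ‖a‖ * ‖b‖ * (‖y‖ * ‖x‖) :=
    (h.map_mul_le _ _).trans <|
      mul_le_mul (norm_star_mul_le a b) (norm_star_mul_le y x) (norm_nonneg _) (by positivity)
  nlinarith [sq_nonneg (‖b‖ * ‖x‖ - ‖a‖ * ‖y‖)]

theorem map_star_mul_mul_herm (h : IsRealPart re) (v v' : Fin (n + 1) → A) :
    re (star (v (Fin.last n)) * v' (Fin.last n) * herm v v') =
      ‖v' (Fin.last n)‖ ^ 2 * re (star (v 0) * v (Fin.last n)) +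
        ∑ i ∈ Ioo 0 (Fin.last n),
          re (star (v (Fin.last n)) * v' (Fin.last n) * (star (v' i) * v i)) +
        ‖v (Fin.last n)‖ ^ 2 * re (star (v' 0) * v' (Fin.last n)) := by
  set b := v (Fin.last n)
  set b' := v' (Fin.last n)
  have first : re (star b * b' * (star b' * v 0)) = ‖b'‖ ^ 2 * re (star (v 0) * b) := by
    rw [mul_assoc, ← mul_assoc b', h.mul_star_self, ← mul_assoc, ← Algebra.commutes,
      mul_assoc, ← Algebra.smul_def, map_smul, smul_eq_mul, h.map_star_mul_comm]
  have last : re (star b * b' * (star (v' 0) * b)) = ‖b‖ ^ 2 * re (star (v' 0) * b') := by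
    rw [← mul_assoc, h.map_mul_comm, ← mul_assoc, ← mul_assoc, h.mul_star_self, mul_assoc,
      ← Algebra.smul_def, map_smul, smul_eq_mul, h.map_mul_comm]
  rw [herm, mul_add, mul_add, mul_sum, map_add, map_add, map_sum, first, last]

theorem map_star_mul_mul_herm_neg (h : IsRealPart re) {v v' : Fin (n + 1) → A}
    (hv : re (herm v v) < 0) (hv' : re (herm v' v') < 0) :
    re (star (v (Fin.last n)) * v' (Fin.last n) * herm v v') < 0 := by
  have hb := pow_pos (norm_pos_iff.2 (h.last_ne_zero_of_map_herm_self_neg hv)) 2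
  have hb' := pow_pos (norm_pos_iff.2 (h.last_ne_zero_of_map_herm_self_neg hv')) 2
  have hmid := sum_le_sum fun i (_ : i ∈ Ioo 0 (Fin.last n)) =>
    h.map_star_mul_mul_star_mul_le (v (Fin.last n)) (v' (Fin.last n)) (v i) (v' i)
  rw [← sum_div, sum_add_distrib, ← mul_sum, ← mul_sum] at hmid
  rw [h.map_herm_self] at hv hv'
  rw [h.map_star_mul_mul_herm]
  nlinarith [mul_neg_of_pos_of_neg hb' hv, mul_neg_of_pos_of_neg hb hv']

theorem map_trace_star_mul_mul_herm_neg (h : IsRealPart re) {v v' : Fin (n + 1) → A}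
    (hv : re (herm v v) < 0) (hv' : re (herm v' v') < 0) :
    re (star (v (Fin.last n)) * v' (Fin.last n) * herm v v' +
      star (star (v (Fin.last n)) * v' (Fin.last n) * herm v v')) < 0 := by
  rw [map_add, h.map_star]
  linarith [h.map_star_mul_mul_herm_neg hv hv']

end IsRealPart

theorem Real.isRealPart_id : IsRealPart (LinearMap.id : ℝ →ₗ[ℝ] ℝ) where
  map_one := rfl
  map_mul_comm := mul_comm
  map_star _ := rfl
  le_norm := le_abs_self
  star_mul_self x := by simp [sq]

theorem Complex.isRealPart_reLm : IsRealPart Complex.reLm where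
  map_one := rfl
  map_mul_comm := by simp [mul_comm]
  map_star _ := Complex.conj_re _
  le_norm := Complex.re_le_norm
  star_mul_self x := by simpa using Complex.conj_mul' x

theorem Quaternion.isRealPart_reₗ :
    IsRealPart (show Quaternion ℝ →ₗ[ℝ] ℝ from QuaternionAlgebra.reₗ _ _ _) where
  map_one := rfl
  map_mul_comm x y := by
    show (x * y).re = (y * x).re
    simp only [Quaternion.re_mul]
    ring
  map_star := Quaternion.re_star
  le_norm x := by
    show x.re ≤ ‖x‖
    have := Quaternion.normSq_eq_norm_mul_self x
    rw [Quaternion.normSq_def'] at this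
    nlinarith [norm_nonneg x, sq_nonneg x.imI, sq_nonneg x.imJ, sq_nonneg x.imK]
  star_mul_self x := by
    rw [Quaternion.star_mul_self, Quaternion.normSq_eq_norm_mul_self, sq]
    rfl

/-- For `A` one of `ℝ`, `ℂ`, `ℍ`: if `⟨v,v⟩ < 0` and `⟨v',v'⟩ < 0` then
`tr_{A/ℝ}(conj(v_{n+1}) v'_{n+1} ⟨v, v'⟩) < 0`. -/
theorem stmt_3 :
    (∀ (n : ℕ) (v v' : Fin (n + 1) → ℝ),
        herm v v < 0 → herm v' v' < 0 →
        star (v (Fin.last n)) * v' (Fin.last n) * herm v v' +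
          star (star (v (Fin.last n)) * v' (Fin.last n) * herm v v') < 0) ∧
    (∀ (n : ℕ) (v v' : Fin (n + 1) → ℂ),
        (herm v v).re < 0 → (herm v' v').re < 0 →
        (star (v (Fin.last n)) * v' (Fin.last n) * herm v v' +
          star (star (v (Fin.last n)) * v' (Fin.last n) * herm v v')).re < 0) ∧
    (∀ (n : ℕ) (v v' : Fin (n + 1) → Quaternion ℝ),
        (herm v v).re < 0 → (herm v' v').re < 0 →
        (star (v (Fin.last n)) * v' (Fin.last n) * herm v v' +
          star (star (v (Fin.last n)) * v' (Fin.last n) * herm v v')).re < 0) :=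
  ⟨fun _ _ _ => Real.isRealPart_id.map_trace_star_mul_mul_herm_neg,
    fun _ _ _ => Complex.isRealPart_reLm.map_trace_star_mul_mul_herm_neg,
    fun _ _ _ => Quaternion.isRealPart_reₗ.map_trace_star_mul_mul_herm_neg⟩
end

section
/- Let G is a finite group with action on Euclidean space E without non-zero fixed vectors (E^G = {0}). Then there exists δ < 1 such that for every u ∈ E there is g ∈ G with ‖gu + u‖ ≤ 2δ‖u‖. -/
/-!
Averaging `u` over `G` gives a fixed vector, hence `∑ g, ρ g u = 0`, so the inner products
`⟪ρ g u, u⟫` sum to zero and one of them is `≤ 0`. For that `g`, since `‖ρ g u‖ = ‖u‖`,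
`‖ρ g u + u‖² ≤ 2 ‖u‖²`, so `δ = √2 / 2` works.
-/

open Finset RealInnerProductSpace

theorem apply_sum_orbit_eq_sum_orbit {R M G : Type*} [Semiring R]
    [SeminormedAddCommGroup M] [Module R M] [Group G] [Fintype G]
    (ρ : G →* (M ≃ₗᵢ[R] M)) (h : G) (u : M) :
    ρ h (∑ g, ρ g u) = ∑ g, ρ g u := by
  rw [map_sum]
  exact Fintype.sum_equiv (Equiv.mulLeft h) _ _ fun g => by simp

theorem exists_inner_nonpos_of_sum_eq_zero {F ι : Type*} [NormedAddCommGroup F]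
    [InnerProductSpace ℝ F] [Fintype ι] [Nonempty ι] {v : ι → F} (hv : ∑ i, v i = 0)
    (u : F) : ∃ i, ⟪v i, u⟫ ≤ 0 := by
  have hsum : ∑ i, ⟪v i, u⟫ ≤ ∑ _i : ι, (0 : ℝ) := by
    rw [← sum_inner, hv, inner_zero_left, sum_const_zero]
  obtain ⟨i, -, hi⟩ := exists_le_of_sum_le univ_nonempty hsum
  exact ⟨i, hi⟩

theorem norm_add_le_sqrt_two_mul_of_inner_nonpos {F : Type*} [NormedAddCommGroup F]
    [InnerProductSpace ℝ F] {x y : F} (hxy : ‖x‖ = ‖y‖) (hinner : ⟪x, y⟫ ≤ 0) :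
    ‖x + y‖ ≤ √2 * ‖y‖ := by
  have hsq : ‖x + y‖ ^ 2 ≤ (√2 * ‖y‖) ^ 2 := by
    rw [norm_add_sq_real, hxy, mul_pow, Real.sq_sqrt zero_le_two]
    linarith
  exact (pow_le_pow_iff_left₀ (norm_nonneg _) (by positivity) two_ne_zero).mp hsq

theorem stmt_7_general {E : Type*} [NormedAddCommGroup E] [InnerProductSpace ℝ E]
    {G : Type*} [Group G] [Finite G]
    (ρ : G →* (E ≃ₗᵢ[ℝ] E))
    (hfix : ∀ v : E, (∀ g : G, ρ g v = v) → v = 0) :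
    ∃ δ : ℝ, δ < 1 ∧ ∀ u : E, ∃ g : G, ‖ρ g u + u‖ ≤ 2 * δ * ‖u‖ := by
  have := Fintype.ofFinite G
  refine ⟨√2 / 2, by nlinarith [Real.sq_sqrt zero_le_two, Real.sqrt_nonneg 2], fun u => ?_⟩
  have horbit : ∑ g, ρ g u = 0 := hfix _ fun h => apply_sum_orbit_eq_sum_orbit ρ h u
  obtain ⟨g, hg⟩ := exists_inner_nonpos_of_sum_eq_zero horbit u
  refine ⟨g, ?_⟩
  rw [show 2 * (√2 / 2) = √2 by ring]
  exact norm_add_le_sqrt_two_mul_of_inner_nonpos ((ρ g).norm_map u) hg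

theorem stmt_7 {E : Type*} [NormedAddCommGroup E] [InnerProductSpace ℝ E]
    [FiniteDimensional ℝ E] {G : Type*} [Group G] [Finite G]
    (ρ : G →* (E ≃ₗᵢ[ℝ] E))
    (hfix : ∀ v : E, (∀ g : G, ρ g v = v) → v = 0) :
    ∃ δ : ℝ, δ < 1 ∧ ∀ u : E, ∃ g : G, ‖ρ g u + u‖ ≤ 2 * δ * ‖u‖ :=
  stmt_7_general ρ hfix
end

section
/- Let Γ₀, Γ₁, ..., Γₙ be groups with surjective homomorphisms ψᵢ : Γᵢ → G onto a fixed group G, and let ×_G Γᵢ = {(γᵢ) ∈ ∏ᵢ Γᵢ : ψᵢ(γᵢ) = ψ₀(γ₀) for all i} be the fibre product. If Γ₀ is diffuse and ker ψᵢ is diffuse for all i ∈ {1,...,n}, then ×_G Γᵢ is diffuse. -/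
/-- A group is diffuse if every finite non-empty subset has an extremal point. -/
def IsDiffuse (Γ : Type*) [Group Γ] : Prop :=
  ∀ A : Finset Γ, A.Nonempty →
    ∃ a ∈ A, ∀ g : Γ, g ≠ 1 → g * a ∉ A ∨ g⁻¹ * a ∉ A

theorem diffuse_of_subsingleton {Γ : Type*} [Group Γ] [Subsingleton Γ] : IsDiffuse Γ := by
  rintro A ⟨a, ha⟩
  exact ⟨a, ha, fun g hg => absurd (Subsingleton.elim g 1) hg⟩

theorem diffuse_of_injective {Γ₁ Γ₂ : Type*} [Group Γ₁] [Group Γ₂] (f : Γ₁ →* Γ₂)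
    (hf : Function.Injective f) (h : IsDiffuse Γ₂) : IsDiffuse Γ₁ := by
  classical
  intro A hA
  obtain ⟨b, hb, hbe⟩ := h (A.image f) (hA.image f)
  obtain ⟨a, ha, rfl⟩ := Finset.mem_image.mp hb
  refine ⟨a, ha, fun g hg => ?_⟩
  have hfg : f g ≠ 1 := fun h1 => hg (hf (by simpa using h1))
  rcases hbe (f g) hfg with h | h
  · exact Or.inl fun hga => h (Finset.mem_image.mpr ⟨g * a, hga, map_mul f g a⟩)
  · exact Or.inr fun hga => h (Finset.mem_image.mpr ⟨g⁻¹ * a, hga, by rw [map_mul, map_inv]⟩)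

theorem diffuse_of_ker {Γ Q : Type*} [Group Γ] [Group Q] (f : Γ →* Q)
    (hQ : IsDiffuse Q) (hK : IsDiffuse f.ker) : IsDiffuse Γ := by
  classical
  intro A hA
  obtain ⟨b, hbB, hb⟩ := hQ (A.image f) (hA.image f)
  classical
  set A' := A.filter (fun a => f a = b) with hA'def
  have hA'ne : A'.Nonempty := by
    obtain ⟨a, ha, hfa⟩ := Finset.mem_image.mp hbB
    exact ⟨a, Finset.mem_filter.mpr ⟨ha, hfa⟩⟩
  obtain ⟨a₀, ha₀⟩ := hA'ne
  have hfa₀ : f a₀ = b := (Finset.mem_filter.mp ha₀).2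
  have pf : ∀ a : Γ, a ∈ A' → a * a₀⁻¹ ∈ f.ker := by
    intro a ha
    have : f a = b := (Finset.mem_filter.mp ha).2
    simp [MonoidHom.mem_ker, this, hfa₀]
  set C : Finset f.ker := A'.attach.image (fun a => (⟨a.1 * a₀⁻¹, pf a.1 a.2⟩ : f.ker)) with hCdef
  have hCne : C.Nonempty := (Finset.attach_nonempty_iff.mpr ⟨a₀, ha₀⟩).image _
  obtain ⟨c, hcC, hc⟩ := hK C hCne
  obtain ⟨a₁, _, hca⟩ := Finset.mem_image.mp hcC
  have ha₁A' : a₁.1 ∈ A' := a₁.2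
  have ha₁A : a₁.1 ∈ A := (Finset.mem_filter.mp ha₁A').1
  have hfa₁ : f a₁.1 = b := (Finset.mem_filter.mp ha₁A').2
  have hcval : (c : Γ) = a₁.1 * a₀⁻¹ := by rw [← hca]
  refine ⟨a₁.1, ha₁A, fun g hg => ?_⟩
  by_cases hfg : f g = 1
  · set g' : f.ker := ⟨g, hfg⟩ with hg'def
    have hg' : g' ≠ 1 := fun h => hg (by simpa [hg'def, Subtype.ext_iff] using h)
    have key : ∀ x : Γ, x ∈ A' → ∀ h : f.ker, (h : Γ) = x * a₀⁻¹ → h ∈ C := by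
      intro x hx h hh
      exact Finset.mem_image.mpr ⟨⟨x, hx⟩, Finset.mem_attach _ _, Subtype.ext hh.symm⟩
    rcases hc g' hg' with h | h
    · refine Or.inl fun hga => h ?_
      have : g * a₁.1 ∈ A' := Finset.mem_filter.mpr ⟨hga, by rw [map_mul, hfg, hfa₁, one_mul]⟩
      exact key _ this (g' * c) (by simp [hg'def, hcval, mul_assoc])
    · refine Or.inr fun hga => h ?_
      have : g⁻¹ * a₁.1 ∈ A' := Finset.mem_filter.mpr
        ⟨hga, by rw [map_mul, map_inv, hfg, hfa₁, inv_one, one_mul]⟩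
      exact key _ this (g'⁻¹ * c) (by simp [hg'def, hcval, mul_assoc])
  · rcases hb (f g) hfg with h | h
    · refine Or.inl fun hga => h (Finset.mem_image.mpr ⟨g * a₁.1, hga, by rw [map_mul, hfa₁]⟩)
    · refine Or.inr fun hga => h (Finset.mem_image.mpr
        ⟨g⁻¹ * a₁.1, hga, by rw [map_mul, map_inv, hfa₁]⟩)

theorem diffuse_pi : ∀ (m : ℕ) (H : Fin m → Type u) [∀ i, Group (H i)],
    (∀ i, IsDiffuse (H i)) → IsDiffuse (∀ i, H i) := by
  intro m
  induction m with
  | zero => intro H _ _; exact diffuse_of_subsingleton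
  | succ m ih =>
    intro H _ h
    set f := Pi.evalMonoidHom H 0 with hf
    refine diffuse_of_ker f (h 0) ?_
    set φ : f.ker →* ∀ i : Fin m, H i.succ :=
      { toFun := fun x i => x.1 i.succ
        map_one' := rfl
        map_mul' := fun x y => rfl } with hφ
    refine diffuse_of_injective φ ?_ (ih (fun i => H i.succ) (fun i => h i.succ))
    intro x y hxy
    refine Subtype.ext (funext fun j => ?_)
    refine Fin.cases ?_ (fun i => ?_) j
    · have hx : x.1 0 = 1 := x.2
      have hy : y.1 0 = 1 := y.2
      rw [hx, hy]
    · exact congrFun hxy i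

theorem stmt_8 {n : ℕ} {G : Type*} [Group G] (Γ : Fin (n + 1) → Type*)
    [∀ i, Group (Γ i)] (ψ : ∀ i, Γ i →* G)
    (hsurj : ∀ i, Function.Surjective (ψ i))
    (h0 : IsDiffuse (Γ 0))
    (hker : ∀ i : Fin (n + 1), i ≠ 0 → IsDiffuse (ψ i).ker)
    (P : Subgroup (∀ i, Γ i))
    (hP : (P : Set (∀ i, Γ i)) = {x | ∀ i, ψ i (x i) = ψ 0 (x 0)}) :
    IsDiffuse P := by
  classical
  have hPmem : ∀ x : ∀ i, Γ i, x ∈ P → ∀ i, ψ i (x i) = ψ 0 (x 0) := by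
    intro x hx
    have : x ∈ (P : Set (∀ i, Γ i)) := hx
    rw [hP] at this
    exact this
  set π : P →* Γ 0 := (Pi.evalMonoidHom Γ 0).comp P.subtype with hπ
  refine diffuse_of_ker π h0 ?_
  set K : ∀ i, Subgroup (Γ i) := fun i => if i = 0 then ⊥ else (ψ i).ker with hK
  have hKd : ∀ i, IsDiffuse (K i) := by
    intro i
    by_cases hi : i = 0
    · subst hi
      have : K 0 = ⊥ := if_pos rfl
      rw [this]
      have : Subsingleton (⊥ : Subgroup (Γ 0)) := by
        constructor; rintro ⟨a, ha⟩ ⟨b, hb⟩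
        simp only [Subgroup.mem_bot] at ha hb
        simp [ha, hb]
      exact diffuse_of_subsingleton
    · have : K i = (ψ i).ker := if_neg hi
      rw [this]
      exact hker i hi
  have hmem : ∀ x : π.ker, ∀ i, (x.1.1 i) ∈ K i := by
    intro x i
    have hx0 : x.1.1 0 = 1 := x.2
    by_cases hi : i = 0
    · subst hi
      simp [hK, hx0]
    · have : K i = (ψ i).ker := if_neg hi
      rw [this, MonoidHom.mem_ker, hPmem x.1.1 x.1.2 i, hx0, map_one]
  set φ : π.ker →* ∀ i, K i :=
    { toFun := fun x i => ⟨x.1.1 i, hmem x i⟩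
      map_one' := rfl
      map_mul' := fun x y => rfl } with hφ
  refine diffuse_of_injective φ ?_ (diffuse_pi (n + 1) (fun i => K i) hKd)
  intro x y hxy
  refine Subtype.ext (Subtype.ext (funext fun i => ?_))
  have := congrFun hxy i
  exact congrArg Subtype.val this
end

section
/- The free product G₁ * G₂ of two virtually diffuse groups G₁ and G₂ is virtually diffuse. -/
namespace IsDiffuse

variable {G Q : Type*} [Group G] [Group Q]

theorem of_injective (f : G →* Q) (hf : Function.Injective f) (hQ : IsDiffuse Q) :
    IsDiffuse G := by
  classical
  intro A hA
  obtain ⟨_, hfa, hext⟩ := hQ (A.image f) (hA.image f)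
  obtain ⟨a, ha, rfl⟩ := Finset.mem_image.mp hfa
  refine ⟨a, ha, fun g hg => ?_⟩
  have hfg : f g ≠ 1 := fun h => hg (hf (h.trans (map_one f).symm))
  refine (hext (f g) hfg).imp (fun h hga => h ?_) (fun h hga => h ?_)
  · simpa using Finset.mem_image_of_mem f hga
  · simpa using Finset.mem_image_of_mem f hga

theorem exists_extremal_of_mul_inv_mem {K : Subgroup G} (hK : IsDiffuse K) (x : G)
    {A : Finset G} (hA : A.Nonempty) (hAK : ∀ a ∈ A, a * x⁻¹ ∈ K) :
    ∃ a ∈ A, ∀ g ∈ K, g ≠ 1 → g * a ∉ A ∨ g⁻¹ * a ∉ A := by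
  classical
  -- right translation by `x⁻¹` moves `A` into `K` and commutes with left multiplication
  have hmem (y : G) : y ∈ A.image (· * x⁻¹) ↔ y * x ∈ A := by simp
  obtain ⟨a₀, ha₀⟩ := hA
  obtain ⟨b, hb, hext⟩ := hK ((A.image (· * x⁻¹)).subtype (· ∈ K))
    ⟨⟨a₀ * x⁻¹, hAK a₀ ha₀⟩, by simpa [Finset.mem_subtype, hmem] using ha₀⟩
  rw [Finset.mem_subtype, hmem] at hb
  refine ⟨b * x, hb, fun g hgK hg => ?_⟩
  refine (hext ⟨g, hgK⟩ (by simpa using hg)).imp (fun h hga => h ?_) (fun h hga => h ?_)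
  · simpa [Finset.mem_subtype, hmem, mul_assoc] using hga
  · simpa [Finset.mem_subtype, hmem, mul_assoc] using hga

theorem of_ker (f : G →* Q) (hker : IsDiffuse f.ker) (hQ : IsDiffuse Q) : IsDiffuse G := by
  classical
  intro A hA
  obtain ⟨_, hq, hqext⟩ := hQ (A.image f) (hA.image f)
  obtain ⟨a₀, ha₀, rfl⟩ := Finset.mem_image.mp hq
  set A₀ := A.filter (f · = f a₀)
  obtain ⟨a, ha, hext⟩ := hker.exists_extremal_of_mul_inv_mem a₀ (A := A₀)
    ⟨a₀, by simp [A₀, ha₀]⟩ fun a ha => by simp_all [A₀]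
  have hfa : f a = f a₀ := (Finset.mem_filter.mp ha).2
  refine ⟨a, (Finset.mem_filter.mp ha).1, fun g hg => ?_⟩
  by_cases hfg : f g = 1
  · refine (hext g hfg hg).imp (fun h hga => h ?_) (fun h hga => h ?_)
    · simp [A₀, hga, hfg, hfa]
    · simp [A₀, hga, hfg, hfa]
  · refine (hqext (f g) hfg).imp (fun h hga => h ?_) (fun h hga => h ?_)
    · simpa [hfa] using Finset.mem_image_of_mem f hga
    · simpa [hfa] using Finset.mem_image_of_mem f hga

theorem prod (hG : IsDiffuse G) (hQ : IsDiffuse Q) : IsDiffuse (G × Q) := by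
  refine of_ker (MonoidHom.fst G Q)
    (of_injective ((MonoidHom.snd G Q).comp (MonoidHom.ker _).subtype) (fun x y hxy => ?_) hQ) hG
  exact Subtype.ext (Prod.ext (x.2.trans y.2.symm) hxy)

theorem comap (f : G →* Q) (hker : IsDiffuse f.ker) {K : Subgroup Q} (hK : IsDiffuse K) :
    IsDiffuse (K.comap f) :=
  of_ker (f.subgroupComap K)
    (of_injective (((K.comap f).subtype.comp (MonoidHom.ker _).subtype).codRestrict f.ker
      fun x => congrArg Subtype.val x.2)
      (fun _ _ h => Subtype.ext <| Subtype.ext <| congrArg (fun z : f.ker => (z : G)) h) hker) hK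

end IsDiffuse

namespace Monoid.CoprodI

variable {ι : Type*} {G : ι → Type*} [∀ i, Group (G i)]

def letterInv (l : Σ i, G i) : Σ i, G i := ⟨l.1, l.2⁻¹⟩

@[simp]
theorem letterInv_letterInv (l : Σ i, G i) : letterInv (letterInv l) = l := by
  obtain ⟨i, g⟩ := l
  exact congrArg (Sigma.mk i) (inv_inv g)

def ofList (L : List (Σ i, G i)) : CoprodI G := (L.map fun l => of l.2).prod

@[simp]
theorem ofList_nil : ofList ([] : List (Σ i, G i)) = 1 := rfl

@[simp]
theorem ofList_cons (l : Σ i, G i) (L : List (Σ i, G i)) : ofList (l :: L) = of l.2 * ofList L :=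
  List.prod_cons

@[simp]
theorem ofList_append (L₁ L₂ : List (Σ i, G i)) : ofList (L₁ ++ L₂) = ofList L₁ * ofList L₂ := by
  simp [ofList]

theorem ofList_reverse_map_letterInv (L : List (Σ i, G i)) :
    ofList (L.map letterInv).reverse = (ofList L)⁻¹ := by
  induction L with
  | nil => simp
  | cons l L ih => simp [ih, letterInv]

def IsReduced (L : List (Σ i, G i)) : Prop :=
  (∀ l ∈ L, l.2 ≠ 1) ∧ L.IsChain fun l l' => l.1 ≠ l'.1

theorem isReduced_cons {l : Σ i, G i} {L : List (Σ i, G i)} :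
    IsReduced (l :: L) ↔ l.2 ≠ 1 ∧ (∀ l' ∈ L.head?, l.1 ≠ l'.1) ∧ IsReduced L := by
  simp only [IsReduced, List.mem_cons, forall_eq_or_imp, List.isChain_cons]
  tauto

theorem isReduced_append {L₁ L₂ : List (Σ i, G i)} :
    IsReduced (L₁ ++ L₂) ↔
      IsReduced L₁ ∧ IsReduced L₂ ∧ ∀ l₁ ∈ L₁.getLast?, ∀ l₂ ∈ L₂.head?, l₁.1 ≠ l₂.1 := by
  simp only [IsReduced, List.mem_append, List.isChain_append]
  grind

theorem IsReduced.reverse_map_letterInv {L : List (Σ i, G i)} (hL : IsReduced L) :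
    IsReduced (L.map letterInv).reverse := by
  refine ⟨fun l hl => ?_, ?_⟩
  · obtain ⟨l', hl', rfl⟩ := List.mem_map.mp (List.mem_reverse.mp hl)
    exact inv_ne_one.mpr (hL.1 l' hl')
  · rw [List.isChain_reverse, List.isChain_map]
    exact hL.2.imp fun _ _ h => Ne.symm h

/-- A word of even length cannot have this shape: its two middle letters would be mutually
inverse, hence in the same factor. -/
theorem IsReduced.exists_eq_conj_of_take_eq {u : List (Σ i, G i)} (hu : IsReduced u)
    (hne : u ≠ [])
    (h : u.take (u.length / 2) = ((u.map letterInv).reverse).take (u.length / 2)) :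
    ∃ (c : CoprodI G) (i : ι) (m : G i), ofList u = c * of m * c⁻¹ := by
  obtain ⟨k, hn⟩ := Nat.even_or_odd' u.length
  rw [show u.length / 2 = k by omega] at h
  set v := u.take k
  have hdrop : u.drop (u.length - k) = (v.map letterInv).reverse := by
    rw [h, List.take_reverse, List.length_map, ← List.map_drop, List.map_reverse,
      List.reverse_reverse, List.map_map]
    simp [Function.comp_def]
  rcases hn with heven | hodd
  · have hv : v ≠ [] := List.ne_nil_of_length_pos <| by
      have := List.length_pos_iff.mpr hne
      simp only [v, List.length_take]
      omega
    have hu_eq : u = v ++ (v.map letterInv).reverse := by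
      rw [← hdrop, show u.length - k = k by omega, List.take_append_drop]
    have hjunction := (isReduced_append.mp (hu_eq ▸ hu)).2.2
    exact absurd rfl (hjunction (v.getLast hv) (by simp [List.getLast?_eq_some_getLast hv])
      (letterInv (v.getLast hv)) (by simp [List.head?_reverse, List.getLast?_eq_some_getLast hv]))
  · have hlt : k < u.length := by omega
    refine ⟨ofList v, _, (u[k]'hlt).2, ?_⟩
    conv_lhs => rw [← List.take_append_drop k u, List.drop_eq_getElem_cons hlt,
      show k + 1 = u.length - k by omega, hdrop]
    rw [ofList_append, ofList_cons, ofList_reverse_map_letterInv, mul_assoc]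

section Syllables

variable [DecidableEq ι] [∀ i, DecidableEq (G i)]

def syllables (x : CoprodI G) : List (Σ i, G i) := (Word.equiv x).toList

theorem isReduced_syllables (x : CoprodI G) : IsReduced (syllables x) :=
  ⟨(Word.equiv x).ne_one, (Word.equiv x).chain_ne⟩

@[simp]
theorem ofList_syllables (x : CoprodI G) : ofList (syllables x) = x :=
  Word.equiv.symm_apply_apply x

theorem syllables_ofList {L : List (Σ i, G i)} (hL : IsReduced L) : syllables (ofList L) = L :=
  congrArg Word.toList (Word.equiv.apply_symm_apply ⟨L, hL.1, hL.2⟩)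

theorem syllables_inv (x : CoprodI G) :
    syllables x⁻¹ = ((syllables x).map letterInv).reverse := by
  rw [← syllables_ofList (isReduced_syllables x).reverse_map_letterInv,
    ofList_reverse_map_letterInv, ofList_syllables]

theorem syllables_mul_of_ne {x y : CoprodI G}
    (h : ∀ l₁ ∈ (syllables x).getLast?, ∀ l₂ ∈ (syllables y).head?, l₁.1 ≠ l₂.1) :
    syllables (x * y) = syllables x ++ syllables y := by
  conv_lhs => rw [← ofList_syllables x, ← ofList_syllables y, ← ofList_append]
  exact syllables_ofList
    (isReduced_append.mpr ⟨isReduced_syllables x, isReduced_syllables y, h⟩)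

theorem exists_syllables_of_mul {i : ι} {m : G i} (hm : m ≠ 1) {y : CoprodI G}
    (hy : (syllables y).head? ≠ some ⟨i, m⁻¹⟩) :
    ∃ (n : G i) (t : List (Σ i, G i)),
      syllables (of m * y) = ⟨i, n⟩ :: t ∧ (syllables y).length ≤ t.length + 1 := by
  have hred := isReduced_syllables y
  conv in of m * y => rw [← ofList_syllables y]
  rcases hw : syllables y with _ | ⟨⟨j, n₀⟩, t⟩
  · refine ⟨m, [], ?_, by simp⟩
    simpa using syllables_ofList (L := [⟨i, m⟩]) (by simpa [isReduced_cons, IsReduced] using hm)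
  rw [hw, isReduced_cons] at hred
  by_cases hij : j = i
  · subst hij
    have hmn : m * n₀ ≠ 1 := fun h => hy (by simp [hw, eq_inv_of_mul_eq_one_right h])
    refine ⟨m * n₀, t, ?_, by simp⟩
    rw [← syllables_ofList (L := ⟨j, m * n₀⟩ :: t) (isReduced_cons.mpr ⟨hmn, hred.2⟩)]
    simp [mul_assoc]
  · refine ⟨m, ⟨j, n₀⟩ :: t, ?_, by simp⟩
    rw [← syllables_ofList (L := ⟨i, m⟩ :: ⟨j, n₀⟩ :: t)
      (isReduced_cons.mpr ⟨hm, by simpa using Ne.symm hij, isReduced_cons.mpr hred⟩)]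
    rfl

/-- The cancellation in `(ofList L)⁻¹ * y` only eats the common prefix of `L` and the word of
`y`, plus at most one merged letter. -/
theorem exists_take_eq_and_length_add_length_le {L : List (Σ i, G i)} (hL : IsReduced L)
    (y : CoprodI G) :
    ∃ k, L.take k = (syllables y).take k ∧
      L.length + (syllables y).length ≤ (syllables ((ofList L)⁻¹ * y)).length + 2 * k + 1 := by
  induction L generalizing y with
  | nil => exact ⟨0, rfl, by simp⟩
  | cons l L ih =>
    obtain ⟨i, m⟩ := l
    obtain ⟨hm, hhead, hL⟩ := isReduced_cons.mp hL
    have hmul : (ofList (⟨i, m⟩ :: L))⁻¹ * y = (ofList L)⁻¹ * (of m⁻¹ * y) := by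
      simp [mul_assoc]
    by_cases hy : (syllables y).head? = some ⟨i, m⟩
    · obtain ⟨t, ht⟩ : ∃ t, syllables y = ⟨i, m⟩ :: t := by
        rcases hs : syllables y with _ | ⟨l, t⟩ <;> simp_all
      have hty : syllables (of m⁻¹ * y) = t := by
        have hred := isReduced_syllables y
        rw [ht, isReduced_cons] at hred
        rw [← ofList_syllables y, ht, ofList_cons, map_inv, inv_mul_cancel_left,
          syllables_ofList hred.2.2]
      obtain ⟨k, htake, hlen⟩ := ih hL (of m⁻¹ * y)
      refine ⟨k + 1, by simp [ht, ← hty, htake], ?_⟩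
      rw [hmul, ht, List.length_cons, List.length_cons]
      rw [hty] at hlen
      omega
    · obtain ⟨n, t, ht, hlen⟩ := exists_syllables_of_mul (inv_ne_one.mpr hm) (y := y)
        (by rwa [inv_inv])
      refine ⟨0, rfl, ?_⟩
      rw [hmul, syllables_mul_of_ne, syllables_inv, syllables_ofList hL, ht]
      · simp only [List.length_append, List.length_reverse, List.length_map, List.length_cons]
        omega
      · rw [syllables_inv, syllables_ofList hL, ht]
        intro l₁ hl₁ l₂ hl₂
        rw [List.getLast?_reverse, List.head?_map] at hl₁
        obtain ⟨l', hl', rfl⟩ := Option.mem_map.mp hl₁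
        obtain rfl := Option.mem_some_iff.mp hl₂
        exact (hhead l' hl').symm

theorem exists_eq_conj_of_length_mul_le {g a : CoprodI G} (hg : g ≠ 1)
    (h₁ : (syllables (g * a)).length ≤ (syllables a).length)
    (h₂ : (syllables (g⁻¹ * a)).length ≤ (syllables a).length) :
    ∃ (c : CoprodI G) (i : ι) (m : G i), g = c * of m * c⁻¹ := by
  obtain ⟨k₁, hk₁, hlen₁⟩ := exists_take_eq_and_length_add_length_le (isReduced_syllables g) a
  obtain ⟨k₂, hk₂, hlen₂⟩ := exists_take_eq_and_length_add_length_le (isReduced_syllables g⁻¹) a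
  rw [ofList_syllables] at hlen₁ hlen₂
  rw [inv_inv, syllables_inv, List.length_reverse, List.length_map] at hlen₂
  rw [syllables_inv] at hk₂
  set u := syllables g
  have htake {L L' : List (Σ i, G i)} {k : ℕ} (hk : u.length / 2 ≤ k)
      (h : L.take k = L'.take k) : L.take (u.length / 2) = L'.take (u.length / 2) := by
    simpa only [List.take_take, min_eq_left hk] using congrArg (List.take (u.length / 2)) h
  have hu : u ≠ [] := fun h => hg ((ofList_syllables g).symm.trans (congrArg ofList h))
  rw [← ofList_syllables g]
  exact (isReduced_syllables g).exists_eq_conj_of_take_eq hu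
    ((htake (by omega) hk₁).trans (htake (by omega) hk₂).symm)

end Syllables

theorem isDiffuse_ker {P : Type*} [Group P] (χ : CoprodI G →* P)
    (hχ : ∀ i, Function.Injective (χ.comp (of : G i →* _))) : IsDiffuse χ.ker := by
  classical
  intro A hA
  obtain ⟨a, ha, hmax⟩ := A.exists_max_image (fun a => (syllables (a : CoprodI G)).length) hA
  refine ⟨a, ha, fun g hg => ?_⟩
  by_contra! hga
  obtain ⟨c, i, m, hconj⟩ := exists_eq_conj_of_length_mul_le (g := (g : CoprodI G)) (a := a)
    (by simpa using hg) (hmax _ hga.1) (hmax _ hga.2)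
  have hm : m = 1 := hχ i (by simpa [hconj] using g.2)
  exact hg (Subtype.ext (by simp [hconj, hm]))

end Monoid.CoprodI

namespace Monoid.Coprod

variable {G₁ G₂ : Type*} [Group G₁] [Group G₂]

/-- The two factors of `G₁ ∗ G₂` as subgroups: unlike `G₁` and `G₂` these live in a common
universe, so they can be indexed by `Bool`. -/
abbrev factor (b : Bool) : Subgroup (G₁ ∗ G₂) := cond b inl.range inr.range

def toCoprodI : G₁ ∗ G₂ →* CoprodI fun b => factor (G₁ := G₁) (G₂ := G₂) b :=
  lift ((CoprodI.of (i := true)).comp (inl : G₁ →* G₁ ∗ G₂).rangeRestrict)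
    ((CoprodI.of (i := false)).comp (inr : G₂ →* G₁ ∗ G₂).rangeRestrict)

def ofCoprodI : (CoprodI fun b => factor (G₁ := G₁) (G₂ := G₂) b) →* G₁ ∗ G₂ :=
  CoprodI.lift fun b => (factor b).subtype

theorem ofCoprodI_comp_toCoprodI :
    (ofCoprodI (G₁ := G₁) (G₂ := G₂)).comp toCoprodI = MonoidHom.id _ :=
  hom_ext rfl rfl

theorem toCoprodI_injective : Function.Injective (toCoprodI (G₁ := G₁) (G₂ := G₂)) :=
  Function.LeftInverse.injective (DFunLike.congr_fun ofCoprodI_comp_toCoprodI)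

theorem isDiffuse_ker_toProd : IsDiffuse (toProd : G₁ ∗ G₂ →* G₁ × G₂).ker := by
  have hcomp : (toProd.comp ofCoprodI).comp toCoprodI = (toProd : G₁ ∗ G₂ →* G₁ × G₂) := by
    rw [MonoidHom.comp_assoc, ofCoprodI_comp_toCoprodI, MonoidHom.comp_id]
  rw [← hcomp, ← MonoidHom.comap_ker]
  refine IsDiffuse.of_injective (toCoprodI.subgroupComap _)
    (fun x y h => Subtype.ext (toCoprodI_injective (congrArg Subtype.val h)))
    (CoprodI.isDiffuse_ker _ fun b x y h => ?_)
  cases b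
  all_goals
    obtain ⟨_, g, rfl⟩ := x
    obtain ⟨_, g', rfl⟩ := y
    simp only [cond_false, cond_true, ofCoprodI, MonoidHom.coe_comp, Function.comp_apply,
      CoprodI.lift_of, Subgroup.subtype_apply, toProd_apply_inl, toProd_apply_inr, Prod.mk.injEq,
      true_and, and_true] at h
    simp [h]

end Monoid.Coprod

theorem stmt_9 {G₁ G₂ : Type*} [Group G₁] [Group G₂]
    (h₁ : ∃ H : Subgroup G₁, H.FiniteIndex ∧ IsDiffuse H)
    (h₂ : ∃ H : Subgroup G₂, H.FiniteIndex ∧ IsDiffuse H) :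
    ∃ H : Subgroup (Monoid.Coprod G₁ G₂), H.FiniteIndex ∧ IsDiffuse H := by
  obtain ⟨H₁, hH₁, hd₁⟩ := h₁
  obtain ⟨H₂, hH₂, hd₂⟩ := h₂
  refine ⟨(H₁.prod H₂).comap Monoid.Coprod.toProd, ⟨?_⟩, ?_⟩
  · rw [Subgroup.index_comap_of_surjective _ Monoid.Coprod.toProd_surjective, Subgroup.index_prod]
    exact mul_ne_zero hH₁.index_ne_zero hH₂.index_ne_zero
  · have hprod : IsDiffuse (H₁.prod H₂) :=
      IsDiffuse.of_injective (Subgroup.prodEquiv H₁ H₂).toMonoidHom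
        (Subgroup.prodEquiv H₁ H₂).injective (hd₁.prod hd₂)
    exact (Monoid.Coprod.isDiffuse_ker_toProd (G₁ := G₁) (G₂ := G₂)).comap _ hprod
end

section
/- An algebraic integer in ℂ all of whose Galois conjugates have absolute value one is a root of unity (Kronecker's theorem). -/
/-!
Adjoining `z` to `ℚ` gives a number field `ℚ⟮z⟯`; its embeddings into `ℂ` send the generator to
roots of the minimal polynomial of `z`, so every conjugate of the generator has norm one. All powers
of the generator are then algebraic integers of `ℚ⟮z⟯` with bounded conjugates, hence have minimal
polynomials of bounded degree with bounded integer coefficients. There are finitely many such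
powers, so two of them coincide.
-/

open Polynomial IntermediateField NumberField

theorem IsIntegral.numberField_adjoin_simple {K : Type*} [Field K] [CharZero K] {z : K}
    (hz : IsIntegral ℚ z) : NumberField ℚ⟮z⟯ :=
  have : FiniteDimensional ℚ ℚ⟮z⟯ := adjoin.finiteDimensional hz
  {}

theorem IntermediateField.aeval_ringHom_gen_minpoly {K L : Type*} [Field K] [CharZero K]
    [Field L] [CharZero L] (z : K) (φ : ℚ⟮z⟯ →+* L) :
    aeval (φ (AdjoinSimple.gen ℚ z)) (minpoly ℚ z) = 0 := by
  rw [← minpoly_gen ℚ z]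
  exact minpoly.aeval_algHom ℚ φ.toRatAlgHom _

/-- Kronecker's theorem: an algebraic integer in `ℂ` all of whose Galois
conjugates (roots of its minimal polynomial over `ℚ`) have absolute value one
is a root of unity. -/
theorem stmt_15 (z : ℂ) (hz : IsIntegral ℤ z)
    (hconj : ∀ w : ℂ, Polynomial.aeval w (minpoly ℚ z) = 0 → ‖w‖ = 1) :
    ∃ k : ℕ, 0 < k ∧ z ^ k = 1 := by
  have := hz.tower_top.numberField_adjoin_simple
  have hgen : IsIntegral ℤ (AdjoinSimple.gen ℚ z) :=
    (isIntegral_algebraMap_iff (algebraMap ℚ⟮z⟯ ℂ).injective).mp hz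
  obtain ⟨k, hk, hgen_pow⟩ := Embeddings.pow_eq_one_of_norm_eq_one ℚ⟮z⟯ ℂ hgen
    fun φ ↦ hconj _ (aeval_ringHom_gen_minpoly z φ)
  refine ⟨k, hk, ?_⟩
  simpa using congrArg (algebraMap ℚ⟮z⟯ ℂ) hgen_pow
end
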